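/- arXiv:2208.04463 — 2 statements merged into one kernel-verified Lean document; each statement's English description precedes it below -/
import Mathlib

section
/- Let R = R₀ ⊕ R₁ be a Z₂-graded commutative ring and Q a Z₂-graded ideal of R such that R₁² + (Q ∩ R₀) = R₀. Then Q is a Z₂-graded prime ideal of R if and only if Q = p + p·R₁ where p is a prime ideal of R₀. -/
/-- A `ℤ/2ℤ`-grading on a commutative ring `R`: additive subgroups `R0`, `R1` with
`R = R0 ⊕ R1` (internal direct sum) and `Rᵢ · Rⱼ ⊆ R_{i+j}`. -/
structure Z2Grading (R : Type*) [CommRing R] where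
  R0 : AddSubgroup R
  R1 : AddSubgroup R
  one_mem : (1 : R) ∈ R0
  mul_mem_00 : ∀ {a b : R}, a ∈ R0 → b ∈ R0 → a * b ∈ R0
  mul_mem_01 : ∀ {a b : R}, a ∈ R0 → b ∈ R1 → a * b ∈ R1
  mul_mem_11 : ∀ {a b : R}, a ∈ R1 → b ∈ R1 → a * b ∈ R0
  sup_eq_top : R0 ⊔ R1 = ⊤
  inf_eq_bot : R0 ⊓ R1 = ⊥

/-- The sum `S + T` of two subsets of `R`. -/
def setSum {R : Type*} [CommRing R] (S T : Set R) : Set R :=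
  {z : R | ∃ a ∈ S, ∃ b ∈ T, z = a + b}

/-- The additive subgroup of `R` generated by the pairwise products of `S` and `T`
(i.e. the product `S·T` of an ideal/submodule pair). -/
def mulSet {R : Type*} [CommRing R] (S T : Set R) : AddSubgroup R :=
  AddSubgroup.closure {x : R | ∃ a ∈ S, ∃ b ∈ T, x = a * b}

namespace Z2Grading

variable {R : Type*} [CommRing R] (G : Z2Grading R)

/-- The set of homogeneous elements of `R`, namely `R₀ ∪ R₁`. -/
def homogeneous : Set R := ↑G.R0 ∪ ↑G.R1

/-- `R₁²`, the ideal of `R₀` generated by the products of two elements of `R₁`. -/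
def sq : AddSubgroup R := mulSet (↑G.R1) (↑G.R1)

/-- `R₁³ = R₁² · R₁`, an `R₀`-submodule of `R₁`. -/
def cube : AddSubgroup R := mulSet (↑G.sq) (↑G.R1)

/-- `I` is an ideal of the subring `R₀` (viewed inside `R`). -/
def IsIdeal0 (I : AddSubgroup R) : Prop :=
  (I : Set R) ⊆ ↑G.R0 ∧ ∀ a ∈ G.R0, ∀ x ∈ I, a * x ∈ I

/-- `N` is an `R₀`-submodule of `R₁` (viewed inside `R`). -/
def IsSubmodule1 (N : AddSubgroup R) : Prop :=
  (N : Set R) ⊆ ↑G.R1 ∧ ∀ a ∈ G.R0, ∀ x ∈ N, a * x ∈ N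

/-- The residual `(N :_{R₀} R₁) = {a ∈ R₀ : a·R₁ ⊆ N}`. -/
def residual (N : AddSubgroup R) : AddSubgroup R where
  carrier := {a : R | a ∈ G.R0 ∧ ∀ r ∈ G.R1, a * r ∈ N}
  zero_mem' := ⟨G.R0.zero_mem, fun r _ => by simpa using N.zero_mem⟩
  add_mem' := by
    rintro a b ⟨ha0, ha⟩ ⟨hb0, hb⟩
    exact ⟨G.R0.add_mem ha0 hb0, fun r hr => by
      rw [add_mul]; exact N.add_mem (ha r hr) (hb r hr)⟩
  neg_mem' := by
    rintro a ⟨ha0, ha⟩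
    exact ⟨G.R0.neg_mem ha0, fun r hr => by
      rw [neg_mul]; exact N.neg_mem (ha r hr)⟩

/-- `J` is a `ℤ₂`-graded ideal of `R`: the homogeneous components of each of its
elements again belong to `J`, i.e. `J = (J ∩ R₀) ⊕ (J ∩ R₁)`. -/
def IsGradedIdeal (J : Ideal R) : Prop :=
  ∀ x ∈ J, ∃ a b : R, a ∈ G.R0 ∧ b ∈ G.R1 ∧ a ∈ J ∧ b ∈ J ∧ x = a + b

/-- `J` is a `ℤ₂`-graded prime ideal of `R`. -/
def IsGradedPrime (J : Ideal R) : Prop :=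
  G.IsGradedIdeal J ∧ J ≠ ⊤ ∧
    ∀ r ∈ G.homogeneous, ∀ s ∈ G.homogeneous, r * s ∈ J → r ∈ J ∨ s ∈ J

/-- `J` is a `ℤ₂`-graded maximal ideal of `R`. -/
def IsGradedMaximal (J : Ideal R) : Prop :=
  G.IsGradedIdeal J ∧ J ≠ ⊤ ∧
    ∀ J' : Ideal R, G.IsGradedIdeal J' → J ≤ J' → J' = J ∨ J' = ⊤

/-- `p` is a prime ideal of the subring `R₀`. -/
def IsPrime0 (p : AddSubgroup R) : Prop :=
  G.IsIdeal0 p ∧ (p : Set R) ≠ ↑G.R0 ∧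
    ∀ a ∈ G.R0, ∀ b ∈ G.R0, a * b ∈ p → a ∈ p ∨ b ∈ p

/-- `p` is a maximal ideal of the subring `R₀`. -/
def IsMaximal0 (p : AddSubgroup R) : Prop :=
  G.IsIdeal0 p ∧ (p : Set R) ≠ ↑G.R0 ∧
    ∀ I : AddSubgroup R, G.IsIdeal0 I → p ≤ I → (I : Set R) = ↑p ∨ (I : Set R) = ↑G.R0

/-- `N` is a prime `R₀`-submodule of `R₁`. -/
def IsPrimeSubmodule1 (N : AddSubgroup R) : Prop :=
  G.IsSubmodule1 N ∧ (N : Set R) ≠ ↑G.R1 ∧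
    ∀ a ∈ G.R0, ∀ m ∈ G.R1, a * m ∈ N → a ∈ G.residual N ∨ m ∈ N

/-- `N` is a maximal (proper) `R₀`-submodule of `R₁`. -/
def IsMaximalSubmodule1 (N : AddSubgroup R) : Prop :=
  G.IsSubmodule1 N ∧ (N : Set R) ≠ ↑G.R1 ∧
    ∀ N' : AddSubgroup R, G.IsSubmodule1 N' → N ≤ N' →
      (N' : Set R) = ↑N ∨ (N' : Set R) = ↑G.R1

/-- `R` is a `ℤ₂`-graded integral domain. -/
def IsGradedDomain : Prop :=
  (1 : R) ≠ 0 ∧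
    ∀ r ∈ G.homogeneous, ∀ s ∈ G.homogeneous, r * s = 0 → r = 0 ∨ s = 0

/-- `R` is a `ℤ₂`-graded field. -/
def IsGradedField : Prop :=
  (1 : R) ≠ 0 ∧ ∀ r ∈ G.homogeneous, r ≠ 0 → IsUnit r

/-- `R₀` as a subring of `R`. -/
def toSubring : Subring R where
  carrier := ↑G.R0
  one_mem' := G.one_mem
  mul_mem' := fun ha hb => G.mul_mem_00 ha hb
  zero_mem' := G.R0.zero_mem
  add_mem' := fun ha hb => G.R0.add_mem ha hb
  neg_mem' := fun ha => G.R0.neg_mem ha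

/-- The Zariski topology on the homogeneous spectrum `Z₂Spec R`: closed sets are the
`V(I) = {P : I ⊆ P}` for `ℤ₂`-graded ideals `I`. -/
def gradedZariski : TopologicalSpace {Q : Ideal R // G.IsGradedPrime Q} :=
  TopologicalSpace.generateFrom
    {U : Set {Q : Ideal R // G.IsGradedPrime Q} |
      ∃ I : Ideal R, G.IsGradedIdeal I ∧ U = {P | ¬ I ≤ P.1}}

end Z2Grading

/-!
Write `p = Q ∩ R₀` and `1 = σ + q` with `σ ∈ R₁²`, `q ∈ p`. For odd `s`, `s = σ s + q s`
shows that `s ∈ p R₁` as soon as `R₁ s ⊆ p`; so the odd part of `Q` is determined by `p`,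
namely `Q ∩ R₁ = p R₁ = {s ∈ R₁ : R₁ s ⊆ p}`. Hence `Q = p + p R₁`, and primality of `Q` on
homogeneous elements reduces to primality of `p` in `R₀`: an odd element outside `Q` is
moved into `R₀ \ p` by multiplying with a suitable odd element.
-/

namespace Z2Grading

variable {R : Type*} [CommRing R] (G : Z2Grading R)

theorem eq_zero_of_mem_R0_of_mem_R1 {x : R} (h0 : x ∈ G.R0) (h1 : x ∈ G.R1) : x = 0 := by
  have hx : x ∈ G.R0 ⊓ G.R1 := ⟨h0, h1⟩
  rwa [G.inf_eq_bot] at hx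

theorem mulSet_R1_le_R1 {p : AddSubgroup R} (hp : (p : Set R) ⊆ G.R0) :
    mulSet (p : Set R) (G.R1 : Set R) ≤ G.R1 :=
  (AddSubgroup.closure_le _).2 <| by
    rintro _ ⟨a, ha, b, hb, rfl⟩
    exact G.mul_mem_01 (hp ha) hb

theorem mulSet_R1_le_ideal {p : AddSubgroup R} {Q : Ideal R} (hp : p ≤ Q.toAddSubgroup) :
    mulSet (p : Set R) (G.R1 : Set R) ≤ Q.toAddSubgroup :=
  (AddSubgroup.closure_le _).2 <| by
    rintro _ ⟨a, ha, b, -, rfl⟩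
    exact Q.mul_mem_right b (hp ha)

theorem mem_mulSet_R1_of_forall_mul_mem {p : AddSubgroup R} {s : R}
    (h1 : (1 : R) ∈ setSum (G.sq : Set R) p) (hs : s ∈ G.R1)
    (hann : ∀ t ∈ G.R1, t * s ∈ p) :
    s ∈ mulSet (p : Set R) (G.R1 : Set R) := by
  obtain ⟨σ, hσ, q, hq, h1⟩ := h1
  have hsq : G.sq ≤ (mulSet (p : Set R) (G.R1 : Set R)).comap (AddMonoidHom.mulRight s) :=
    (AddSubgroup.closure_le _).2 <| by
      rintro _ ⟨a, ha, b, hb, rfl⟩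
      refine AddSubgroup.subset_closure ⟨b * s, hann b hb, a, ha, ?_⟩
      rw [AddMonoidHom.mulRight_apply]
      ring
  have hs_eq : s = σ * s + q * s := by rw [← add_mul, ← h1, one_mul]
  rw [hs_eq]
  exact add_mem (hsq hσ) (AddSubgroup.subset_closure ⟨q, hq, s, hs, rfl⟩)

theorem mem_of_forall_R1_mul_mem {Q : Ideal R} {s : R}
    (h1 : (1 : R) ∈ setSum (G.sq : Set R) ↑(Q.toAddSubgroup ⊓ G.R0)) (hs : s ∈ G.R1)
    (hann : ∀ t ∈ G.R1, t * s ∈ Q) : s ∈ Q :=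
  G.mulSet_R1_le_ideal inf_le_left <|
    G.mem_mulSet_R1_of_forall_mul_mem h1 hs fun t ht => ⟨hann t ht, G.mul_mem_11 ht hs⟩

theorem mem_or_mem_of_mul_mem_R0_R1 {Q : Ideal R}
    (hsat : ∀ s ∈ G.R1, (∀ t ∈ G.R1, t * s ∈ Q) → s ∈ Q)
    (hprime : ∀ a ∈ G.R0, ∀ b ∈ G.R0, a * b ∈ Q → a ∈ Q ∨ b ∈ Q)
    {r s : R} (hr : r ∈ G.R0) (hs : s ∈ G.R1) (hrs : r * s ∈ Q) : r ∈ Q ∨ s ∈ Q := by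
  refine or_iff_not_imp_left.2 fun hrQ => hsat s hs fun t ht => ?_
  have hr_ts : r * (t * s) ∈ Q := by
    rw [mul_left_comm]
    exact Q.mul_mem_left t hrs
  exact (hprime r hr _ (G.mul_mem_11 ht hs) hr_ts).resolve_left hrQ

theorem mem_or_mem_of_mul_mem_R1_R1 {Q : Ideal R}
    (hsat : ∀ s ∈ G.R1, (∀ t ∈ G.R1, t * s ∈ Q) → s ∈ Q)
    (hprime : ∀ a ∈ G.R0, ∀ b ∈ G.R0, a * b ∈ Q → a ∈ Q ∨ b ∈ Q)
    {r s : R} (hr : r ∈ G.R1) (hs : s ∈ G.R1) (hrs : r * s ∈ Q) : r ∈ Q ∨ s ∈ Q := by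
  refine or_iff_not_imp_left.2 fun hrQ => ?_
  obtain ⟨t, ht, htr⟩ : ∃ t ∈ G.R1, t * r ∉ Q := by
    by_contra! h
    exact hrQ (hsat r hr h)
  refine hsat s hs fun u hu => ?_
  have htr_us : t * r * (u * s) ∈ Q := by
    rw [mul_mul_mul_comm]
    exact Q.mul_mem_left _ hrs
  exact (hprime _ (G.mul_mem_11 ht hr) _ (G.mul_mem_11 hu hs) htr_us).resolve_left htr

theorem mem_or_mem_of_mul_mem_homogeneous {Q : Ideal R}
    (hsat : ∀ s ∈ G.R1, (∀ t ∈ G.R1, t * s ∈ Q) → s ∈ Q)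
    (hprime : ∀ a ∈ G.R0, ∀ b ∈ G.R0, a * b ∈ Q → a ∈ Q ∨ b ∈ Q) :
    ∀ r ∈ G.homogeneous, ∀ s ∈ G.homogeneous, r * s ∈ Q → r ∈ Q ∨ s ∈ Q := by
  rintro r (hr | hr) s (hs | hs) hrs
  · exact hprime r hr s hs hrs
  · exact G.mem_or_mem_of_mul_mem_R0_R1 hsat hprime hr hs hrs
  · exact (G.mem_or_mem_of_mul_mem_R0_R1 hsat hprime hs hr (mul_comm r s ▸ hrs)).symm
  · exact G.mem_or_mem_of_mul_mem_R1_R1 hsat hprime hr hs hrs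

theorem isGradedPrime_of_isPrime0_inf {Q : Ideal R} (hQ : G.IsGradedIdeal Q)
    (h1 : (1 : R) ∈ setSum (G.sq : Set R) ↑(Q.toAddSubgroup ⊓ G.R0))
    (hp : G.IsPrime0 (Q.toAddSubgroup ⊓ G.R0)) : G.IsGradedPrime Q := by
  refine ⟨hQ, fun htop => hp.2.1 ?_,
    G.mem_or_mem_of_mul_mem_homogeneous (fun s hs => G.mem_of_forall_R1_mul_mem h1 hs)
      fun a ha b hb hab => ?_⟩
  · ext x
    simp [htop]
  · exact (hp.2.2 a ha b hb ⟨hab, G.mul_mem_00 ha hb⟩).imp And.left And.left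

theorem isPrime0_inf_of_isGradedPrime {Q : Ideal R} (hQ : G.IsGradedPrime Q) :
    G.IsPrime0 (Q.toAddSubgroup ⊓ G.R0) := by
  obtain ⟨-, hne, hprime⟩ := hQ
  refine ⟨⟨fun x hx => hx.2, fun a ha x hx => ⟨Q.mul_mem_left a hx.1, G.mul_mem_00 ha hx.2⟩⟩,
    fun h => hne ?_, fun a ha b hb hab => ?_⟩
  · have h1 : (1 : R) ∈ Q.toAddSubgroup ⊓ G.R0 := by
      rw [← SetLike.mem_coe, h]
      exact G.one_mem
    exact Q.eq_top_of_isUnit_mem h1.1 isUnit_one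
  · exact (hprime a (Or.inl ha) b (Or.inl hb) hab.1).imp (⟨·, ha⟩) (⟨·, hb⟩)

theorem coe_eq_setSum_inf_R0 {Q : Ideal R} (hQ : G.IsGradedIdeal Q)
    (h1 : (1 : R) ∈ setSum (G.sq : Set R) ↑(Q.toAddSubgroup ⊓ G.R0)) :
    (Q : Set R) = setSum ↑(Q.toAddSubgroup ⊓ G.R0)
      (mulSet ↑(Q.toAddSubgroup ⊓ G.R0) (G.R1 : Set R) : Set R) := by
  ext x
  constructor
  · intro hx
    obtain ⟨a, b, ha, hb, haQ, hbQ, rfl⟩ := hQ x hx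
    exact ⟨a, ⟨haQ, ha⟩, b, G.mem_mulSet_R1_of_forall_mul_mem h1 hb fun t ht =>
      ⟨Q.mul_mem_left t hbQ, G.mul_mem_11 ht hb⟩, rfl⟩
  · rintro ⟨a, ha, b, hb, rfl⟩
    exact Q.add_mem ha.1 (G.mulSet_R1_le_ideal inf_le_left hb)

theorem inf_R0_eq_of_coe_eq_setSum {p : AddSubgroup R} {Q : Ideal R} (hp : (p : Set R) ⊆ G.R0)
    (hQ : (Q : Set R) = setSum ↑p (mulSet (p : Set R) (G.R1 : Set R) : Set R)) :
    Q.toAddSubgroup ⊓ G.R0 = p := by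
  have hmem (x : R) : x ∈ Q ↔ ∃ a ∈ p, ∃ b ∈ mulSet (p : Set R) (G.R1 : Set R), x = a + b :=
    Set.ext_iff.1 hQ x
  ext x
  constructor
  · rintro ⟨hxQ, hx0⟩
    obtain ⟨a, ha, b, hb, rfl⟩ := (hmem _).1 hxQ
    have hb0 : b ∈ G.R0 := by simpa using G.R0.sub_mem hx0 (hp ha)
    rwa [G.eq_zero_of_mem_R0_of_mem_R1 hb0 (G.mulSet_R1_le_R1 hp hb), add_zero]
  · intro hx
    exact ⟨(hmem x).2 ⟨x, hx, 0, zero_mem _, (add_zero x).symm⟩, hp hx⟩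

end Z2Grading

/-- if `Q` is a `ℤ₂`-graded ideal with `R₁² + (Q ∩ R₀) = R₀`, then `Q` is
`ℤ₂`-graded prime iff `Q = p + p·R₁` for a prime ideal `p` of `R₀`. -/
theorem graded_prime_iff_of_comaximal {R : Type*} [CommRing R] (G : Z2Grading R)
    (Q : Ideal R) (hQ : G.IsGradedIdeal Q)
    (hco : setSum (↑G.sq) ((Q : Set R) ∩ ↑G.R0) = (↑G.R0 : Set R)) :
    G.IsGradedPrime Q ↔
      ∃ p : AddSubgroup R, G.IsPrime0 p ∧
        (Q : Set R) = setSum ↑p (mulSet (p : Set R) (G.R1 : Set R) : Set R) := by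
  have h1 : (1 : R) ∈ setSum (G.sq : Set R) ↑(Q.toAddSubgroup ⊓ G.R0) := by
    rw [AddSubgroup.coe_inf, Submodule.coe_toAddSubgroup, hco]
    exact G.one_mem
  constructor
  · intro hQp
    exact ⟨_, G.isPrime0_inf_of_isGradedPrime hQp, G.coe_eq_setSum_inf_R0 hQ h1⟩
  · rintro ⟨p, hp, hQp⟩
    obtain rfl := G.inf_R0_eq_of_coe_eq_setSum hp.1.1 hQp
    exact G.isGradedPrime_of_isPrime0_inf hQ h1 hp
end

section
/- Let R = R₀ ⊕ R₁ be a Z₂-graded commutative ring and R' an R₀-submodule of R₁ with R₁³ ⊄ R'. Then R' is a maximal R₀-submodule of R₁ if and only if (R' :_{R₀} R₁) is a maximal ideal of R₀; and in that case R' = (R' :_{R₀} R₁)·R₁. -/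
/-! Write `q = (N :_{R₀} R₁)`. If `N` is maximal and `m ∈ R₁ \ N`, then `R₁ = N + R₀·m`, so an
element of `R₀` lies in `q` as soon as it kills `m` modulo `N`. For an ideal `I ⊇ q` of `R₀`
the submodule `N + I·m` is either `N`, forcing `I ⊆ q`, or `R₁`, giving `m = n + x·m` with
`x ∈ I`, so `1 - x ∈ q ⊆ I` and `I = R₀`.

Conversely, `R₁³ ⊄ N` yields `s ∈ R₁² \ q`, so maximality of `q` gives `1 = c + d·s` with
`c ∈ q`. Every `m ∈ R₁` with `m·R₁ ⊆ q` then equals `c·m + d·(s·m)`, which lies in `q·R₁ ⊆ N`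
because `s·m` is a sum of terms `a·b·m = (m·b)·a`. As `N·R₁ ⊆ q`, this gives `N = q·R₁`, and a
submodule `N' ⊇ N` has residual `q` (so `N' ⊆ N`) or `R₀` (so `N' = R₁`). -/

def supMul {R : Type*} [Ring R] (N I : AddSubgroup R) (m : R) : AddSubgroup R where
  carrier := {y : R | ∃ n ∈ N, ∃ x ∈ I, y = n + x * m}
  zero_mem' := ⟨0, N.zero_mem, 0, I.zero_mem, by simp⟩
  add_mem' := by
    rintro _ _ ⟨n, hn, x, hx, rfl⟩ ⟨n', hn', x', hx', rfl⟩
    exact ⟨n + n', N.add_mem hn hn', x + x', I.add_mem hx hx', by rw [add_mul]; abel⟩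
  neg_mem' := by
    rintro _ ⟨n, hn, x, hx, rfl⟩
    exact ⟨-n, N.neg_mem hn, -x, I.neg_mem hx, by rw [neg_mul, neg_add]⟩

section supMul

variable {R : Type*} [Ring R] {N I : AddSubgroup R} {m : R}

theorem le_supMul : N ≤ supMul N I m :=
  fun n hn => ⟨n, hn, 0, I.zero_mem, by simp⟩

theorem mul_mem_supMul {x : R} (hx : x ∈ I) : x * m ∈ supMul N I m :=
  ⟨0, N.zero_mem, x, hx, by simp⟩

theorem mem_supMul_self (h1 : (1 : R) ∈ I) : m ∈ supMul N I m := by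
  simpa using mul_mem_supMul (N := N) (m := m) h1

end supMul

section mulSet

variable {R : Type*} [CommRing R]

theorem mul_mem_mulSet {S T : Set R} {a b : R} (ha : a ∈ S) (hb : b ∈ T) :
    a * b ∈ mulSet S T :=
  AddSubgroup.subset_closure ⟨a, ha, b, hb, rfl⟩

theorem mulSet_le {S T : Set R} {H : AddSubgroup R}
    (h : ∀ a ∈ S, ∀ b ∈ T, a * b ∈ H) : mulSet S T ≤ H :=
  (AddSubgroup.closure_le _).2 <| by
    rintro _ ⟨a, ha, b, hb, rfl⟩
    exact h a ha b hb

theorem mul_mem_of_mem_mulSet {S T : Set R} {H : AddSubgroup R} {x m : R}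
    (hx : x ∈ mulSet S T) (h : ∀ a ∈ S, ∀ b ∈ T, a * b * m ∈ H) : x * m ∈ H :=
  mulSet_le (H := H.comap (AddMonoidHom.mulRight m)) h hx

end mulSet

namespace Z2Grading

variable {R : Type*} [CommRing R] (G : Z2Grading R) {N N' I : AddSubgroup R} {m : R}

theorem isIdeal0_R0 : G.IsIdeal0 G.R0 :=
  ⟨le_rfl, fun _ ha _ hx => G.mul_mem_00 ha hx⟩

theorem sq_le_R0 : G.sq ≤ G.R0 :=
  mulSet_le fun _ ha _ hb => G.mul_mem_11 ha hb

variable {G}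

theorem IsIdeal0.coe_eq_R0_of_one_mem (hI : G.IsIdeal0 I) (h1 : (1 : R) ∈ I) :
    (I : Set R) = G.R0 :=
  hI.1.antisymm fun a ha => by simpa using hI.2 a ha 1 h1

theorem isIdeal0_supMul (hN : G.IsIdeal0 N) (hI : G.IsIdeal0 I) (hm : m ∈ G.R0) :
    G.IsIdeal0 (supMul N I m) := by
  constructor
  · rintro _ ⟨n, hn, x, hx, rfl⟩
    exact G.R0.add_mem (hN.1 hn) (G.mul_mem_00 (hI.1 hx) hm)
  · rintro a ha _ ⟨n, hn, x, hx, rfl⟩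
    exact ⟨a * n, hN.2 a ha n hn, a * x, hI.2 a ha x hx, by ring⟩

theorem isSubmodule1_supMul (hN : G.IsSubmodule1 N) (hI : G.IsIdeal0 I) (hm : m ∈ G.R1) :
    G.IsSubmodule1 (supMul N I m) := by
  constructor
  · rintro _ ⟨n, hn, x, hx, rfl⟩
    exact G.R1.add_mem (hN.1 hn) (G.mul_mem_01 (hI.1 hx) hm)
  · rintro a ha _ ⟨n, hn, x, hx, rfl⟩
    exact ⟨a * n, hN.2 a ha n hn, a * x, hI.2 a ha x hx, by ring⟩

theorem IsMaximal0.exists_one_eq_add_mul {p : AddSubgroup R} (hp : G.IsMaximal0 p) {s : R}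
    (hs : s ∈ G.R0) (hsp : s ∉ p) : ∃ c ∈ p, ∃ d ∈ G.R0, (1 : R) = c + d * s := by
  rcases hp.2.2 _ (isIdeal0_supMul hp.1 G.isIdeal0_R0 hs) le_supMul with h | h
  · exact absurd (h ▸ mem_supMul_self G.one_mem : s ∈ (p : Set R)) hsp
  · exact (h ▸ G.one_mem : (1 : R) ∈ (supMul p G.R0 s : Set R))

theorem residual_isIdeal0 (hN : G.IsSubmodule1 N) : G.IsIdeal0 (G.residual N) := by
  refine ⟨fun _ hx => hx.1, fun a ha x ⟨hx0, hx⟩ => ⟨G.mul_mem_00 ha hx0, fun r hr => ?_⟩⟩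
  rw [mul_assoc]
  exact hN.2 a ha _ (hx r hr)

theorem residual_mono (h : N ≤ N') : G.residual N ≤ G.residual N' :=
  fun _ ⟨ha0, ha⟩ => ⟨ha0, fun r hr => h (ha r hr)⟩

theorem coe_residual_eq_R0_iff (hN : G.IsSubmodule1 N) :
    (G.residual N : Set R) = G.R0 ↔ (N : Set R) = G.R1 := by
  constructor
  · intro h
    have h1 : (1 : R) ∈ G.residual N := (h ▸ G.one_mem : (1 : R) ∈ (G.residual N : Set R))
    exact hN.1.antisymm fun r hr => by simpa using h1.2 r hr
  · intro h
    exact Set.Subset.antisymm (fun _ ha => ha.1)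
      fun a ha => ⟨ha, fun r hr => (h ▸ G.mul_mem_01 ha hr : a * r ∈ (N : Set R))⟩

theorem mul_mem_residual (hN : G.IsSubmodule1 N) {n r : R} (hn : n ∈ N) (hr : r ∈ G.R1) :
    n * r ∈ G.residual N := by
  refine ⟨G.mul_mem_11 (hN.1 hn) hr, fun t ht => ?_⟩
  rw [mul_assoc, mul_comm]
  exact hN.2 _ (G.mul_mem_11 hr ht) n hn

theorem mulSet_residual_le : mulSet (G.residual N) G.R1 ≤ N :=
  mulSet_le fun _ ha b hb => ha.2 b hb

theorem mem_residual_of_mul_mem (hN : G.IsSubmodule1 N)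
    (hgen : (supMul N G.R0 m : Set R) = G.R1) {b : R} (hb : b ∈ G.R0) (hbm : b * m ∈ N) :
    b ∈ G.residual N := by
  refine ⟨hb, fun t ht => ?_⟩
  obtain ⟨n, hn, c, hc, rfl⟩ : t ∈ (supMul N G.R0 m : Set R) := hgen ▸ ht
  rw [mul_add, mul_left_comm]
  exact N.add_mem (hN.2 b hb n hn) (hN.2 c hc _ hbm)

theorem isMaximal0_residual (hN : G.IsSubmodule1 N) (hmax : G.IsMaximalSubmodule1 N) :
    G.IsMaximal0 (G.residual N) := by
  obtain ⟨m, hm, hmN⟩ := Set.not_subset.1 fun h => hmax.2.1 (hN.1.antisymm h)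
  have hmax' {I : AddSubgroup R} (hI : G.IsIdeal0 I) :=
    hmax.2.2 _ (isSubmodule1_supMul hN hI hm) le_supMul
  have hgen : (supMul N G.R0 m : Set R) = G.R1 := by
    refine (hmax' G.isIdeal0_R0).resolve_left fun h => hmN ?_
    exact (h ▸ mem_supMul_self G.one_mem : m ∈ (N : Set R))
  refine ⟨residual_isIdeal0 hN, mt (coe_residual_eq_R0_iff hN).1 hmax.2.1,
    fun I hI hqI => ?_⟩
  rcases hmax' hI with h | h
  · refine Or.inl (Set.Subset.antisymm (fun x hx => ?_) hqI)
    exact mem_residual_of_mul_mem hN hgen (hI.1 hx) (SetLike.coe_injective h ▸ mul_mem_supMul hx)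
  · obtain ⟨n, hn, x, hx, hmx⟩ : m ∈ (supMul N I m : Set R) := h ▸ hm
    have h1x : 1 - x ∈ G.residual N :=
      mem_residual_of_mul_mem hN hgen (G.R0.sub_mem G.one_mem (hI.1 hx))
        (by rwa [sub_mul, one_mul, sub_eq_of_eq_add hmx])
    exact Or.inr (hI.coe_eq_R0_of_one_mem (by simpa using I.add_mem (hqI h1x) hx))

theorem exists_mem_sq_not_mem_residual (h3 : ¬ (G.cube : Set R) ⊆ N) :
    ∃ s ∈ G.sq, s ∉ G.residual N := by
  by_contra! h
  exact h3 (mulSet_le fun s hs r hr => (h s hs).2 r hr)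

theorem mem_mulSet_residual (h3 : ¬ (G.cube : Set R) ⊆ N) (hq : G.IsMaximal0 (G.residual N))
    (hm : m ∈ G.R1) (hmr : ∀ r ∈ G.R1, m * r ∈ G.residual N) :
    m ∈ mulSet (G.residual N) G.R1 := by
  obtain ⟨s, hs, hsq⟩ := exists_mem_sq_not_mem_residual h3
  obtain ⟨c, hc, d, hd, h1⟩ := hq.exists_one_eq_add_mul (G.sq_le_R0 hs) hsq
  have hsm : s * m ∈ mulSet (G.residual N) G.R1 :=
    mul_mem_of_mem_mulSet hs fun a ha b hb => by
      rw [show a * b * m = m * b * a by ring]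
      exact mul_mem_mulSet (hmr b hb) ha
  have hdsm : d * (s * m) ∈ mulSet (G.residual N) G.R1 := by
    rw [mul_comm]
    exact mul_mem_of_mem_mulSet hsm fun a ha b hb => by
      rw [mul_assoc]
      exact mul_mem_mulSet ha (by simpa [mul_comm] using G.mul_mem_01 hd hb)
  rw [show m = c * m + d * (s * m) by linear_combination m * h1]
  exact add_mem (mul_mem_mulSet hc hm) hdsm

theorem eq_mulSet_residual (hN : G.IsSubmodule1 N) (h3 : ¬ (G.cube : Set R) ⊆ N)
    (hq : G.IsMaximal0 (G.residual N)) : N = mulSet (G.residual N) G.R1 :=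
  le_antisymm (fun _ hm => mem_mulSet_residual h3 hq (hN.1 hm) fun _ => mul_mem_residual hN hm)
    mulSet_residual_le

theorem isMaximalSubmodule1_of_isMaximal0_residual (hN : G.IsSubmodule1 N)
    (h3 : ¬ (G.cube : Set R) ⊆ N) (hq : G.IsMaximal0 (G.residual N)) :
    G.IsMaximalSubmodule1 N := by
  refine ⟨hN, mt (coe_residual_eq_R0_iff hN).2 hq.2.1, fun N' hN' hNN' => ?_⟩
  rcases hq.2.2 _ (residual_isIdeal0 hN') (residual_mono hNN') with h | h
  · refine Or.inl (Set.Subset.antisymm (fun m hm => ?_) hNN')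
    refine mulSet_residual_le (mem_mulSet_residual h3 hq (hN'.1 hm) fun r hr => ?_)
    exact (h ▸ mul_mem_residual hN' hm hr : m * r ∈ (G.residual N : Set R))
  · exact Or.inr ((coe_residual_eq_R0_iff hN').1 h)

end Z2Grading

/-- for an `R₀`-submodule `R'` of `R₁` with `R₁³ ⊄ R'`, `R'` is a maximal
submodule of `R₁` iff `(R' :_{R₀} R₁)` is a maximal ideal of `R₀`; in this case
`R' = (R' :_{R₀} R₁)·R₁`. -/
theorem maximal_submodule_iff {R : Type*} [CommRing R] (G : Z2Grading R)
    (N : AddSubgroup R) (hN : G.IsSubmodule1 N) (h3 : ¬ ((G.cube : Set R) ⊆ ↑N)) :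
    (G.IsMaximalSubmodule1 N ↔ G.IsMaximal0 (G.residual N)) ∧
    (G.IsMaximalSubmodule1 N → N = mulSet (↑(G.residual N)) (↑G.R1)) :=
  ⟨⟨G.isMaximal0_residual hN, G.isMaximalSubmodule1_of_isMaximal0_residual hN h3⟩,
    fun hmax => G.eq_mulSet_residual hN h3 (G.isMaximal0_residual hN hmax)⟩
end
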